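/- arXiv:1411.2226 — 4 statements merged into one kernel-verified Lean document; each statement's English description precedes it below -/
import Mathlib

section
/- Every ℝ-algebra automorphism φ of the quaternion algebra ℍ preserves the Euclidean norm: ‖φ q‖ = ‖q‖ for all q ∈ ℍ. (This is part of the paper's claim that the automorphism group of ℍ is SO(3), acting by isometries on the imaginary quaternions.) -/
open Quaternion

lemma quat_sq_key (q : Quaternion ℝ) :
    q * q + ((normSq q : ℝ) : Quaternion ℝ) = ((2 * q.re : ℝ) : Quaternion ℝ) * q := by
  rw [← Quaternion.self_mul_star, ← mul_add, Quaternion.self_add_star',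
    Quaternion.coe_commutes]

theorem quaternion_alg_aut_isometry (φ : Quaternion ℝ ≃ₐ[ℝ] Quaternion ℝ)
    (q : Quaternion ℝ) : ‖φ q‖ = ‖q‖ := by
  have hcoe : ∀ x : ℝ, φ (x : Quaternion ℝ) = (x : Quaternion ℝ) := fun x => φ.commutes x
  have h1 : φ q * φ q + ((normSq q : ℝ) : Quaternion ℝ)
      = ((2 * q.re : ℝ) : Quaternion ℝ) * φ q := by
    have := congrArg φ (quat_sq_key q)
    simpa [map_mul, map_add, hcoe] using this
  have h2 := quat_sq_key (φ q)
  have hre : (φ q).re = q.re := by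
    by_contra hne
    set c : ℝ := 2 * q.re - 2 * (φ q).re with hc_def
    set d : ℝ := normSq q - normSq (φ q) with hd_def
    have hsub : (d : Quaternion ℝ) = (c : Quaternion ℝ) * φ q := by
      have h3 : φ q * φ q + ((normSq q : ℝ) : Quaternion ℝ)
          - (φ q * φ q + ((normSq (φ q) : ℝ) : Quaternion ℝ))
          = ((2 * q.re : ℝ) : Quaternion ℝ) * φ q
            - ((2 * (φ q).re : ℝ) : Quaternion ℝ) * φ q := by rw [h1, h2]
      rw [add_sub_add_left_eq_sub, ← sub_mul, ← Quaternion.coe_sub] at h3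
      rw [hd_def, hc_def]
      push_cast at h3 ⊢
      convert h3 using 2
    have hc : c ≠ 0 := by
      intro h
      apply hne
      have : 2 * q.re = 2 * (φ q).re := by linarith [sub_eq_zero.mp h]
      linarith
    have hq : φ q = ((c⁻¹ * d : ℝ) : Quaternion ℝ) := by
      calc φ q = ((c⁻¹ : ℝ) : Quaternion ℝ) * ((c : ℝ) * φ q) := by
            rw [← mul_assoc, ← Quaternion.coe_mul, inv_mul_cancel₀ hc, Quaternion.coe_one, one_mul]
        _ = ((c⁻¹ : ℝ) : Quaternion ℝ) * (d : Quaternion ℝ) := by rw [hsub]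
        _ = ((c⁻¹ * d : ℝ) : Quaternion ℝ) := (Quaternion.coe_mul _ _).symm
    have hqx : q = ((c⁻¹ * d : ℝ) : Quaternion ℝ) := by
      have := congrArg φ.symm hq
      rwa [AlgEquiv.symm_apply_apply, show ((c⁻¹ * d : ℝ) : Quaternion ℝ)
        = algebraMap ℝ (Quaternion ℝ) (c⁻¹ * d) from rfl, AlgEquiv.commutes] at this
    have hfix : φ q = q := by rw [hqx, hcoe]
    exact hne (by rw [hfix])
  rw [hre] at h2
  have hnsq : normSq (φ q) = normSq q := by
    have h3 := h2.trans h1.symm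
    exact Quaternion.coe_injective (add_left_cancel h3)
  have h4 : ‖φ q‖ * ‖φ q‖ = ‖q‖ * ‖q‖ := by
    rw [← Quaternion.normSq_eq_norm_mul_self, ← Quaternion.normSq_eq_norm_mul_self, hnsq]
  exact (mul_self_inj (norm_nonneg _) (norm_nonneg _)).mp h4
end

section
/- Every ℝ-algebra automorphism φ of the quaternion algebra ℍ is inner: there exists a nonzero quaternion u such that φ(x) = u * x * u⁻¹ for all x ∈ ℍ. (This is the surjectivity part of the paper's claim that the automorphism group of ℍ is SO(3).) -/
/-!
An algebra map out of `ℍ` is determined by the images of `i` and `j`, which are anticommuting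
square roots of `-1`; so it suffices to conjugate one such pair `(i, j)` onto another `(p, q)`.
If `a * a = b * b = -1`, every `x - b * x * a` intertwines: `(x - b x a) a = b (x - b x a)`, and
`x = 1` or `x = j` makes it nonzero, since otherwise `b = -a` and `j` would commute with `i`.
This gives `w ≠ 0` with `w i = p w`. After conjugating by `w` we may assume `p = i`; then
`x - q x j` for `x ∈ {1, i}` still commutes with `i` (both `j` and `q` anticommute with it)
and carries `j` to `q`.
-/

open Quaternion QuaternionAlgebra

section Ring

variable {A : Type*} [Ring A] {a b : A}

theorem sub_mul_mul_mul_eq_mul_sub_mul_mul (ha : a * a = -1) (hb : b * b = -1) (x : A) :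
    (x - b * x * a) * a = b * (x - b * x * a) := by
  linear_combination (norm := noncomm_ring) (-(b * x)) * ha + hb * (x * a)

theorem Commute.sub_mul_mul {c x : A} (hx : Commute c x) (ha : a * c = -(c * a))
    (hb : b * c = -(c * b)) : Commute c (x - b * x * a) := by
  refine hx.sub_right ?_
  calc c * (b * x * a) = -(b * c * x * a) := by rw [hb]; noncomm_ring
    _ = -(b * x * (c * a)) := by rw [mul_assoc b c x, hx.eq]; noncomm_ring
    _ = b * x * a * c := by rw [mul_assoc _ a c, ha]; noncomm_ring

theorem commute_of_sub_mul_mul_eq_zero (ha : a * a = -1) (h1 : 1 - b * a = 0) {y : A}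
    (hy : y - b * y * a = 0) : Commute a y := by
  have hb : b = -a := by
    calc b = -(b * a * a) := by rw [mul_assoc, ha, mul_neg_one, neg_neg]
      _ = -a := by rw [← sub_eq_zero.mp h1, one_mul]
  have hy' : y = -(a * y * a) := by
    calc y = b * y * a := sub_eq_zero.mp hy
      _ = -(a * y * a) := by rw [hb, neg_mul, neg_mul]
  calc a * y = -(a * y * (a * a)) := by rw [ha, mul_neg_one, neg_neg]
    _ = -(a * y * a) * a := by rw [neg_mul, mul_assoc (a * y)]
    _ = y * a := by rw [← hy']

theorem exists_sub_mul_mul_ne_zero (ha : a * a = -1) {y : A} (hy : ¬Commute a y) :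
    ∃ x ∈ ({1, y} : Set A), x - b * x * a ≠ 0 := by
  by_contra! h
  refine hy (commute_of_sub_mul_mul_eq_zero ha ?_ (h y (by simp)))
  simpa using h 1 (by simp)

end Ring

section DivisionRing

variable {D : Type*} [DivisionRing D] {i j : D}

theorem exists_ne_zero_mul_eq_mul (hi : i * i = -1) (hij : ¬Commute i j) {p : D}
    (hp : p * p = -1) : ∃ u ≠ 0, u * i = p * u := by
  obtain ⟨x, -, hx⟩ := exists_sub_mul_mul_ne_zero (b := p) hi hij
  exact ⟨_, hx, sub_mul_mul_mul_eq_mul_sub_mul_mul hi hp x⟩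

theorem exists_ne_zero_commute_mul_eq_mul (hj : j * j = -1) (hij : ¬Commute i j)
    (hji : j * i = -(i * j)) {q : D} (hq : q * q = -1) (hqi : q * i = -(i * q)) :
    ∃ v ≠ 0, Commute i v ∧ v * j = q * v := by
  obtain ⟨x, hx, hv⟩ := exists_sub_mul_mul_ne_zero (b := q) hj (y := i) fun h => hij h.symm
  have hxi : Commute i x := by
    rcases hx with rfl | hx
    · exact Commute.one_right i
    · exact hx ▸ Commute.refl i
  exact ⟨_, hv, hxi.sub_mul_mul hji hqi, sub_mul_mul_mul_eq_mul_sub_mul_mul hj hq x⟩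

end DivisionRing

namespace QuaternionAlgebra.Basis

variable {R A D : Type*} [CommRing R] [Ring A] [Algebra R A] [DivisionRing D] [Algebra R D]

theorem i_mul_i_eq_neg_one (q : Basis A (-1 : R) 0 (-1)) : q.i * q.i = -1 := by
  simp [q.i_mul_i]

theorem j_mul_j_eq_neg_one (q : Basis A (-1 : R) 0 (-1)) : q.j * q.j = -1 := by
  simp [q.j_mul_j]

theorem j_mul_i_eq_neg (q : Basis A (-1 : R) 0 (-1)) : q.j * q.i = -(q.i * q.j) := by
  simp [q.i_mul_j, q.j_mul_i]

theorem not_commute_i_j (h2 : (2 : D) ≠ 0) (q : Basis D (-1 : R) 0 (-1)) :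
    ¬Commute q.i q.j := fun h => by
  have h2ij : (2 : D) * (q.i * q.j) = 0 := by
    rw [two_mul]; nth_rw 1 [h.eq]; rw [j_mul_i_eq_neg, neg_add_cancel]
  have hi : q.i ≠ 0 := fun h0 => by simpa [h0] using q.i_mul_i_eq_neg_one
  have hj : q.j ≠ 0 := fun h0 => by simpa [h0] using q.j_mul_j_eq_neg_one
  exact (mul_eq_zero.mp h2ij).elim h2 (mul_ne_zero hi hj)

theorem exists_ne_zero_mul_i_eq_and_mul_j_eq (h2 : (2 : D) ≠ 0)
    (q₁ q₂ : Basis D (-1 : R) 0 (-1)) :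
    ∃ u ≠ 0, u * q₁.i = q₂.i * u ∧ u * q₁.j = q₂.j * u := by
  have hij := q₁.not_commute_i_j h2
  obtain ⟨w, hw, hwi⟩ := exists_ne_zero_mul_eq_mul q₁.i_mul_i_eq_neg_one hij q₂.i_mul_i_eq_neg_one
  let σ : D ≃ₐ[R] D := MulSemiringAction.toAlgEquiv R D (ConjAct.toConjAct (Units.mk0 w hw)⁻¹)
  have hσ (x : D) : σ x = w⁻¹ * x * w := by simp [σ, ConjAct.units_smul_def]
  let q₃ := q₂.compHom σ.toAlgHom
  have hq₃i : q₃.i = q₁.i := by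
    rw [show q₃.i = _ from hσ q₂.i, mul_assoc, ← hwi, inv_mul_cancel_left₀ hw]
  obtain ⟨v, hv, hvi, hvj⟩ := exists_ne_zero_commute_mul_eq_mul q₁.j_mul_j_eq_neg_one hij
    q₁.j_mul_i_eq_neg q₃.j_mul_j_eq_neg_one (hq₃i ▸ q₃.j_mul_i_eq_neg)
  refine ⟨w * v, mul_ne_zero hw hv, ?_, ?_⟩
  · rw [mul_assoc, ← hvi.eq, ← mul_assoc, hwi, mul_assoc]
  · rw [mul_assoc, hvj, show q₃.j = _ from hσ q₂.j]
    simp only [mul_assoc, mul_inv_cancel_left₀ hw]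

end QuaternionAlgebra.Basis

theorem Quaternion.exists_ne_zero_algHom_eq_conj {R D : Type*} [CommRing R] [DivisionRing D]
    [Algebra R D] (h2 : (2 : D) ≠ 0) (f g : ℍ[R] →ₐ[R] D) :
    ∃ u ≠ 0, ∀ x, g x = u * f x * u⁻¹ := by
  obtain ⟨u, hu, hui, huj⟩ := Basis.exists_ne_zero_mul_i_eq_and_mul_j_eq h2
    ((Basis.self R).compHom f) ((Basis.self R).compHom g)
  let ψ := MulSemiringAction.toAlgEquiv R D (ConjAct.toConjAct (Units.mk0 u hu))
  have hψ (x : D) : ψ x = u * x * u⁻¹ := by simp [ψ, ConjAct.units_smul_def]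
  have hgψ : g = (ψ : D →ₐ[R] D).comp f := Quaternion.hom_ext
    (((eq_mul_inv_iff_mul_eq₀ hu).mpr hui.symm).trans (hψ _).symm)
    (((eq_mul_inv_iff_mul_eq₀ hu).mpr huj.symm).trans (hψ _).symm)
  exact ⟨u, hu, fun x => by rw [← hψ]; exact congr($hgψ x)⟩

theorem quaternion_alg_aut_inner (φ : Quaternion ℝ ≃ₐ[ℝ] Quaternion ℝ) :
    ∃ u : Quaternion ℝ, u ≠ 0 ∧ ∀ x : Quaternion ℝ, φ x = u * x * u⁻¹ := by
  have h2 : (2 : ℍ[ℝ]) ≠ 0 := fun h => by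
    have : (2 : ℝ) = 0 := congrArg QuaternionAlgebra.re h
    norm_num at this
  exact Quaternion.exists_ne_zero_algHom_eq_conj h2 (AlgHom.id ℝ ℍ[ℝ]) φ
end

section
/- Every ℝ-algebra automorphism φ of the quaternion algebra ℍ, regarded as an ℝ-linear endomorphism of the 4-dimensional real vector space ℍ, has determinant 1. (This is the orientation-preserving part of the paper's claim that the automorphism group of ℍ is SO(3) rather than O(3).) -/
/-!
An algebra endomorphism `φ` of `ℍ` fixes `1`, and the images `x = φ i`, `y = φ j`, `φ k = x y`
all square to `-1`. A quaternion squaring to `-1` is a pure unit vector, so `x`, `y` and `x y` are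
pure; then `x y = -(x ⬝ y) + x × y` forces `x ⟂ y` and `φ k = x × y`. In the basis `1, i, j, k`
the matrix of `φ` is block diagonal with blocks `1` and `[x, y, x × y]`, whose determinant is the
triple product `(x × y) ⬝ (x × y) = |φ k|² = 1`.
-/

open Matrix

namespace Quaternion

variable {R : Type*}

section CommRing

variable [CommRing R]

def imVec (a : ℍ[R]) : Fin 3 → R := ![a.imI, a.imJ, a.imK]

theorem re_mul_eq_sub_dotProduct (a b : ℍ[R]) :
    (a * b).re = a.re * b.re - imVec a ⬝ᵥ imVec b := by
  simp only [re_mul, imVec, dotProduct, Fin.sum_univ_three, cons_val]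
  ring

theorem imVec_mul (a b : ℍ[R]) :
    imVec (a * b) = a.re • imVec b + b.re • imVec a + imVec a ⨯₃ imVec b := by
  ext r
  fin_cases r <;> simp [imVec, cross_apply, imI_mul, imJ_mul, imK_mul] <;> ring

variable (R) in
/-- `QuaternionAlgebra.basisOneIJK`, retyped as a basis of `ℍ[R]` rather than `ℍ[R,-1,0,-1]`. -/
noncomputable abbrev basisOneIJK : Module.Basis (Fin 4) R ℍ[R] :=
  QuaternionAlgebra.basisOneIJK _ _ _

theorem coe_basisOneIJK_repr (a : ℍ[R]) :
    ⇑((basisOneIJK R).repr a) = ![a.re, a.imI, a.imJ, a.imK] :=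
  rfl

theorem coe_basisOneIJK :
    ⇑(basisOneIJK R) = ![1, ⟨0, 1, 0, 0⟩, ⟨0, 0, 1, 0⟩, ⟨0, 0, 0, 1⟩] := by
  ext c : 1
  apply (basisOneIJK R).repr.injective
  ext r
  rw [Module.Basis.repr_self, coe_basisOneIJK_repr]
  fin_cases c <;> fin_cases r <;> simp

theorem basisOneIJK_succ_mul_self (c : Fin 3) :
    basisOneIJK R c.succ * basisOneIJK R c.succ = -1 := by
  fin_cases c <;> ext <;> simp only [re_mul, imI_mul, imJ_mul, imK_mul] <;> simp [coe_basisOneIJK]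

theorem basisOneIJK_one_mul_two : basisOneIJK R 1 * basisOneIJK R 2 = basisOneIJK R 3 := by
  ext <;> simp only [re_mul, imI_mul, imJ_mul, imK_mul] <;> simp [coe_basisOneIJK]

theorem det_eq_det_imVec_of_map_one (f : ℍ[R] →ₗ[R] ℍ[R]) (h1 : f 1 = 1) :
    LinearMap.det f = det ![imVec (f (basisOneIJK R 1)), imVec (f (basisOneIJK R 2)),
      imVec (f (basisOneIJK R 3))] := by
  have hsub : (LinearMap.toMatrix (basisOneIJK R) (basisOneIJK R) f).submatrix Fin.succ Fin.succ =
      (of ![imVec (f (basisOneIJK R 1)), imVec (f (basisOneIJK R 2)),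
        imVec (f (basisOneIJK R 3))])ᵀ := by
    ext r c
    fin_cases r <;> fin_cases c <;> simp [LinearMap.toMatrix_apply, coe_basisOneIJK_repr, imVec]
  rw [← LinearMap.det_toMatrix (basisOneIJK R), det_succ_column_zero, Fin.sum_univ_four]
  simp [hsub, LinearMap.toMatrix_apply, coe_basisOneIJK, coe_basisOneIJK_repr, h1]
  rfl

end CommRing

section Ordered

variable [CommRing R] [LinearOrder R] [IsStrictOrderedRing R]

/-- The imaginary parts of `a * a = -1` say `2 a.re • imVec a = 0`, and `imVec a = 0` would give
`a.re ^ 2 = -1`. -/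
theorem re_eq_zero_of_mul_self_eq_neg_one {a : ℍ[R]} (h : a * a = -1) : a.re = 0 := by
  have hre := congrArg (·.re) h
  have hI := congrArg (·.imI) h
  have hJ := congrArg (·.imJ) h
  have hK := congrArg (·.imK) h
  simp only [re_mul, imI_mul, imJ_mul, imK_mul, re_neg, imI_neg, imJ_neg, imK_neg, re_one,
    imI_one, imJ_one, imK_one, neg_zero] at hre hI hJ hK
  nlinarith [sq_nonneg a.re, sq_nonneg a.imI, sq_nonneg a.imJ, sq_nonneg a.imK]

theorem det_imVec_eq_one {x y : ℍ[R]} (hx : x * x = -1) (hy : y * y = -1)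
    (hxy : x * y * (x * y) = -1) : det ![imVec x, imVec y, imVec (x * y)] = 1 := by
  have hx₀ := re_eq_zero_of_mul_self_eq_neg_one hx
  have hy₀ := re_eq_zero_of_mul_self_eq_neg_one hy
  have hxy₀ := re_eq_zero_of_mul_self_eq_neg_one hxy
  have hcross : imVec (x * y) = imVec x ⨯₃ imVec y := by
    simp only [imVec_mul, hx₀, hy₀, zero_smul, zero_add]
  have hunit : imVec (x * y) ⬝ᵥ imVec (x * y) = 1 := by
    have h := congrArg (·.re) hxy
    simp only [re_mul_eq_sub_dotProduct, hxy₀, mul_zero, zero_sub, re_neg, re_one] at h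
    exact neg_injective h
  rw [← triple_product_eq_det, triple_product_permutation, triple_product_permutation, ← hcross,
    hunit]

theorem det_algHom_eq_one (φ : ℍ[R] →ₐ[R] ℍ[R]) : LinearMap.det φ.toLinearMap = 1 := by
  have map_sq {q : ℍ[R]} (hq : q * q = -1) : φ q * φ q = -1 := by
    rw [← map_mul, hq, map_neg, map_one]
  rw [det_eq_det_imVec_of_map_one _ (map_one φ)]
  simp only [AlgHom.toLinearMap_apply, ← basisOneIJK_one_mul_two, map_mul]
  refine det_imVec_eq_one (map_sq (basisOneIJK_succ_mul_self 0))
    (map_sq (basisOneIJK_succ_mul_self 1)) ?_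
  rw [← map_mul, basisOneIJK_one_mul_two]
  exact map_sq (basisOneIJK_succ_mul_self 2)

end Ordered

end Quaternion

theorem quaternion_alg_aut_det_one (φ : Quaternion ℝ ≃ₐ[ℝ] Quaternion ℝ) :
    LinearMap.det (φ.toLinearMap) = 1 :=
  Quaternion.det_algHom_eq_one φ.toAlgHom
end

section
/- For every imaginary unit quaternion q (q.re = 0, ‖q‖ = 1), the (-I)-eigenspace of its image under the standard embedding Φ : ℍ → Matrix (Fin 2) (Fin 2) ℂ is one-dimensional: the kernel of the ℂ-linear endomorphism of ℂ² given by v ↦ (Φ q).mulVec v + I • v has complex dimension 1. (This underlies the paper's identification S² = PH of the sphere of admissible complex structures with the complex projective line, each imaginary unit quaternion being identified with its eigenspace for the eigenvalue -i.) -/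
/-! `Φ q + z • 1` has determinant `z² + 2 (re q) z + ‖q‖²` and trace `2 (re q + z)`.
For an imaginary unit `q` and `z = i` this is a nonzero singular `2 × 2` matrix, whose kernel is
therefore a line. -/

open Complex Matrix

/-- The standard embedding of the quaternions into the `2 × 2` complex matrices:
`a + b·i + c·j + d·k ↦ ![![a + b·I, -c + d·I], ![c + d·I, a - b·I]]`. -/
noncomputable def quatToMatrix (q : Quaternion ℝ) : Matrix (Fin 2) (Fin 2) ℂ :=
  ![![(q.re : ℂ) + (q.imI : ℂ) * I, -(q.imJ : ℂ) + (q.imK : ℂ) * I],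
    ![(q.imJ : ℂ) + (q.imK : ℂ) * I, (q.re : ℂ) - (q.imI : ℂ) * I]]

theorem Matrix.mulVecLin_smul_one {R n : Type*} [CommSemiring R] [Fintype n] [DecidableEq n]
    (z : R) : (z • (1 : Matrix n n R)).mulVecLin = z • LinearMap.id := by
  ext v i
  simp

theorem Matrix.finrank_ker_mulVecLin_eq_one_of_det_eq_zero {K : Type*} [Field K]
    {A : Matrix (Fin 2) (Fin 2) K} (hdet : A.det = 0) (hA : A ≠ 0) :
    Module.finrank K (LinearMap.ker A.mulVecLin) = 1 := by
  have hker_ne_bot : LinearMap.ker A.mulVecLin ≠ ⊥ := by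
    obtain ⟨v, hv, hAv⟩ := Matrix.exists_mulVec_eq_zero_iff.2 hdet
    exact (Submodule.ne_bot_iff _).2 ⟨v, hAv, hv⟩
  have hker_ne_top : LinearMap.ker A.mulVecLin ≠ ⊤ := by
    rw [Ne, LinearMap.ker_eq_top, ← Matrix.mulVecLin_zero]
    exact fun h => hA (Matrix.toLin'.injective h)
  have hlt := Submodule.finrank_lt hker_ne_top
  have hpos := Submodule.one_le_finrank_iff.2 hker_ne_bot
  rw [Module.finrank_fin_fun] at hlt
  omega

theorem trace_quatToMatrix (q : Quaternion ℝ) : (quatToMatrix q).trace = 2 * q.re := by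
  rw [Matrix.trace_fin_two]
  simp only [quatToMatrix, cons_val', cons_val_zero, cons_val_one, empty_val', cons_val_fin_one]
  ring

theorem det_quatToMatrix_add_smul_one (q : Quaternion ℝ) (z : ℂ) :
    (quatToMatrix q + z • 1).det = z ^ 2 + 2 * q.re * z + (Quaternion.normSq q : ℝ) := by
  rw [Matrix.det_fin_two, Quaternion.normSq_def']
  simp only [Matrix.add_apply, Matrix.smul_apply, one_apply_eq, ne_eq, zero_ne_one, one_ne_zero,
    not_false_eq_true, one_apply_ne, smul_eq_mul, mul_one, mul_zero, add_zero]
  simp only [quatToMatrix, cons_val', cons_val_zero, cons_val_one, empty_val', cons_val_fin_one]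
  push_cast
  linear_combination (-(q.imI : ℂ) ^ 2 - (q.imK : ℂ) ^ 2) * I_sq

theorem eigenspace_neg_I_one_dimensional (q : Quaternion ℝ)
    (hre : q.re = 0) (hnorm : ‖q‖ = 1) :
    Module.finrank ℂ
      (LinearMap.ker
        ((quatToMatrix q).mulVecLin + I • (LinearMap.id : (Fin 2 → ℂ) →ₗ[ℂ] (Fin 2 → ℂ)))) = 1 := by
  have hnormSq : Quaternion.normSq q = 1 := by
    rw [Quaternion.normSq_eq_norm_mul_self, hnorm, mul_one]
  rw [← Matrix.mulVecLin_smul_one, ← Matrix.mulVecLin_add]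
  apply Matrix.finrank_ker_mulVecLin_eq_one_of_det_eq_zero
  · rw [det_quatToMatrix_add_smul_one, hre, hnormSq, I_sq]
    push_cast
    ring
  · intro h
    have htrace := congrArg Matrix.trace h
    rw [trace_add, trace_smul, trace_one, trace_quatToMatrix, hre, trace_zero] at htrace
    simp at htrace
end
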